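/- arXiv:1002.3859 — 10 statements merged into one kernel-verified Lean document; each statement's English description precedes it below -/
import Mathlib

section
/- Let p : ℕ → ℚ be defined by p 0 = 1 and p n = n^{-2} · Σ_{0 ≤ j < n} p j · p (n-1-j) for n ≥ 1, and let P = Σ_{n ≥ 0} p n · X^n be the associated formal power series over ℚ. Then X · P'' + P' = P^2, where ' denotes the formal derivative of power series. -/
open PowerSeries

/-- The generating function `P = Σ p n X^n` of the probability that two random binary
search trees are identical satisfies the formal differential equation
`X · P'' + P' = P²`. -/
theorem bst_equality_gf_ode
    (p : ℕ → ℚ) (hp0 : p 0 = 1)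
    (hrec : ∀ n : ℕ, 1 ≤ n →
      p n = ((n : ℚ) ^ 2)⁻¹ * ∑ j ∈ Finset.range n, p j * p (n - 1 - j)) :
    PowerSeries.X * (PowerSeries.derivative ℚ (PowerSeries.derivative ℚ (PowerSeries.mk p)))
      + PowerSeries.derivative ℚ (PowerSeries.mk p) = (PowerSeries.mk p) ^ 2 := by
  ext n
  have key : ∀ n : ℕ, (PowerSeries.coeff n) ((PowerSeries.mk p) ^ 2)
      = ∑ j ∈ Finset.range (n + 1), p j * p (n - j) := by
    intro n
    rw [sq, PowerSeries.coeff_mul, Finset.Nat.sum_antidiagonal_eq_sum_range_succ_mk]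
    simp [PowerSeries.coeff_mk]
  have hsum : ∀ n : ℕ, p (n + 1) * ((n : ℚ) + 1) ^ 2
      = ∑ j ∈ Finset.range (n + 1), p j * p (n - j) := by
    intro n
    have h := hrec (n + 1) (Nat.le_add_left 1 n)
    have hne : ((n : ℚ) + 1) ^ 2 ≠ 0 := by positivity
    have hS : ∑ j ∈ Finset.range (n + 1), p j * p (n + 1 - 1 - j)
        = ∑ j ∈ Finset.range (n + 1), p j * p (n - j) := by
      refine Finset.sum_congr rfl fun j hj => ?_
      simp [Nat.add_sub_cancel]
    rw [h, Nat.cast_add, Nat.cast_one, hS, inv_mul_eq_div, div_mul_cancel₀ _ hne]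
  cases n with
  | zero =>
    simp only [map_add, PowerSeries.coeff_zero_eq_constantCoeff, map_mul,
      PowerSeries.constantCoeff_X, zero_mul, zero_add]
    rw [← PowerSeries.coeff_zero_eq_constantCoeff, PowerSeries.coeff_derivative,
      PowerSeries.coeff_mk, key]
    have := hsum 0
    simp [hp0] at this ⊢
    linarith
  | succ n =>
    rw [map_add, PowerSeries.coeff_succ_X_mul, PowerSeries.coeff_derivative,
      PowerSeries.coeff_derivative, PowerSeries.coeff_mk,
      key, ← hsum (n + 1)]
    push_cast
    ring
end

section
/- Let p : ℕ → ℝ be defined by p 0 = 1 and p n = n^{-2} · Σ_{0 ≤ j < n} p j · p (n-1-j) for n ≥ 1. For every positive integer n₀, set c := 6·n₀/(n₀+2) and ϱ := min over 0 ≤ j ≤ n₀ of (6·n₀·(j+1)/(p j · (n₀+2)))^{1/(j+1)}. Then for all n ≥ 0, p n ≤ c · (n+1) · ϱ^{-n-1}. -/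
lemma bst_gauss (n : ℕ) : ∑ j ∈ Finset.range n, ((j:ℝ)+1) = n*(n+1)/2 := by
  induction n with
  | zero => simp
  | succ n ih => rw [Finset.sum_range_succ, ih]; push_cast; ring

lemma bst_cube (n : ℕ) :
    ∑ j ∈ Finset.range n, ((j:ℝ)+1)*((n:ℝ)-j) = n*(n+1)*(n+2)/6 := by
  induction n with
  | zero => simp
  | succ n ih =>
    have h : ∀ j ∈ Finset.range (n+1),
        ((j:ℝ)+1)*(((n+1:ℕ):ℝ)-j) = ((j:ℝ)+1)*((n:ℝ)-j) + ((j:ℝ)+1) := by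
      intro j _; push_cast; ring
    rw [Finset.sum_congr rfl h, Finset.sum_add_distrib, Finset.sum_range_succ, ih,
      bst_gauss]
    push_cast; ring

/-- Inductive upper bound for the probability that two random binary search trees are
identical: for every positive integer `n₀`, with `c = 6n₀/(n₀+2)` and
`ϱ = min_{0 ≤ j ≤ n₀} (6n₀(j+1)/(p j (n₀+2)))^{1/(j+1)}`, one has
`p n ≤ c (n+1) ϱ^{-n-1}` for all `n ≥ 0`. -/
theorem bst_equality_probability_upper_bound
    (p : ℕ → ℝ) (hp0 : p 0 = 1)
    (hrec : ∀ n : ℕ, 1 ≤ n →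
      p n = ((n : ℝ) ^ 2)⁻¹ * ∑ j ∈ Finset.range n, p j * p (n - 1 - j))
    (n₀ : ℕ) (hn₀ : 1 ≤ n₀)
    (c : ℝ) (hc : c = 6 * n₀ / (n₀ + 2))
    (ϱ : ℝ)
    (hϱ : ϱ = (Finset.range (n₀ + 1)).inf'
        ⟨0, Finset.mem_range.mpr (Nat.succ_pos n₀)⟩
        (fun j => (6 * (n₀ : ℝ) * (j + 1) / (p j * ((n₀ : ℝ) + 2))) ^ ((1 : ℝ) / (j + 1)))) :
    ∀ n : ℕ, p n ≤ c * (n + 1) * ϱ ^ (-(n : ℤ) - 1) := by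
  have ppos : ∀ n, 0 < p n := by
    intro n
    induction n using Nat.strong_induction_on with
    | _ n ih =>
      rcases Nat.eq_zero_or_pos n with h | h
      · simp [h, hp0]
      · rw [hrec n h]
        have hn : (0:ℝ) < (n:ℝ) := by exact_mod_cast h
        refine mul_pos (by positivity) (Finset.sum_pos ?_ ⟨0, Finset.mem_range.mpr h⟩)
        intro j hj
        exact mul_pos (ih j (Finset.mem_range.mp hj)) (ih (n-1-j) (by omega))
  have hA : (1:ℝ) ≤ (n₀:ℝ) := by exact_mod_cast hn₀
  have cpos : 0 < c := by rw [hc]; positivity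
  have ϱpos : 0 < ϱ := by
    rw [hϱ]
    refine (Finset.lt_inf'_iff _).2 ?_
    intro j hj
    have := ppos j
    have h0 : (0:ℝ) < (n₀:ℝ) := by linarith
    exact Real.rpow_pos_of_pos (by positivity) _
  -- base case bound for j ≤ n₀
  have base : ∀ j, j ≤ n₀ → p j ≤ c * (j + 1) * ϱ ^ (-(j:ℤ) - 1) := by
    intro j hj
    have hmem : j ∈ Finset.range (n₀+1) := Finset.mem_range.mpr (by omega)
    have hle : ϱ ≤ (6 * (n₀:ℝ) * (j + 1) / (p j * ((n₀:ℝ) + 2))) ^ ((1:ℝ)/(j+1)) := by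
      rw [hϱ]; exact Finset.inf'_le _ hmem
    set X : ℝ := 6 * (n₀:ℝ) * (j + 1) / (p j * ((n₀:ℝ) + 2)) with hX
    have hXpos : 0 < X := by have := ppos j; positivity
    have hjne : ((j:ℝ)+1) ≠ 0 := by positivity
    have h1 : ϱ ^ ((j:ℝ)+1) ≤ (X ^ ((1:ℝ)/(j+1))) ^ ((j:ℝ)+1) :=
      Real.rpow_le_rpow ϱpos.le hle (by positivity)
    rw [← Real.rpow_mul hXpos.le, one_div_mul_cancel hjne, Real.rpow_one] at h1
    have h2 : ϱ ^ (j+1 : ℕ) ≤ X := by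
      have : ϱ ^ ((j:ℝ)+1) = ϱ ^ (j+1 : ℕ) := by
        rw [← Real.rpow_natCast ϱ (j+1)]; push_cast; ring_nf
      rwa [this] at h1
    have hXeq : X = c * ((j:ℝ)+1) / p j := by
      rw [hX, hc]
      field_simp
    have hzpow : ϱ ^ (-(j:ℤ) - 1) = (ϱ ^ (j+1 : ℕ))⁻¹ := by
      rw [show -(j:ℤ) - 1 = -((j+1 : ℕ) : ℤ) by push_cast; ring, zpow_neg, zpow_natCast]
    rw [hzpow]
    rw [hXeq] at h2
    have hp := ppos j
    have hpow : (0:ℝ) < ϱ ^ (j+1 : ℕ) := by positivity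
    rw [le_div_iff₀ hp] at h2
    rw [← div_eq_mul_inv, le_div_iff₀ hpow]
    calc p j * ϱ ^ (j+1 : ℕ) = ϱ ^ (j+1 : ℕ) * p j := mul_comm _ _
      _ ≤ c * ((j:ℝ)+1) := h2
  intro n
  induction n using Nat.strong_induction_on with
  | _ n ih =>
    by_cases hle : n ≤ n₀
    · exact base n hle
    · push_neg at hle
      have hn1 : 1 ≤ n := by omega
      have hNpos : (0:ℝ) < (n:ℝ) := by exact_mod_cast hn1
      have Rpos : (0:ℝ) < ϱ ^ (-(n:ℤ) - 1) := zpow_pos ϱpos _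
      rw [hrec n hn1]
      have key : ∀ j ∈ Finset.range n, p j * p (n - 1 - j) ≤
          c^2 * ϱ ^ (-(n:ℤ) - 1) * (((j:ℝ)+1) * ((n:ℝ)-j)) := by
        intro j hj
        have hjn : j < n := Finset.mem_range.mp hj
        set m := n - 1 - j with hm
        have hmn : m < n := by omega
        have hsum : m + (j + 1) = n := by omega
        have hmR : (m:ℝ) + 1 = (n:ℝ) - j := by
          have := congrArg (Nat.cast : ℕ → ℝ) hsum
          push_cast at this; linarith
        have b1 := ih j hjn
        have b2 := ih m hmn
        have hb2pos : 0 ≤ c * ((m:ℝ) + 1) * ϱ ^ (-(m:ℤ) - 1) := by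
          positivity
        have hmul := mul_le_mul b1 b2 (ppos m).le (by positivity)
        refine hmul.trans_eq ?_
        have hexp : (-(j:ℤ) - 1) + (-(m:ℤ) - 1) = -(n:ℤ) - 1 := by omega
        rw [show c^2 * ϱ ^ (-(n:ℤ) - 1) * (((j:ℝ)+1) * ((n:ℝ)-j))
            = c^2 * ϱ ^ ((-(j:ℤ) - 1) + (-(m:ℤ) - 1)) * (((j:ℝ)+1) * ((m:ℝ)+1)) by
          rw [hexp, hmR]]
        rw [zpow_add₀ ϱpos.ne']
        ring
      have hS := Finset.sum_le_sum key
      rw [← Finset.mul_sum, bst_cube] at hS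
      have step1 : ((n:ℝ)^2)⁻¹ * ∑ j ∈ Finset.range n, p j * p (n - 1 - j)
          ≤ ((n:ℝ)^2)⁻¹ * (c^2 * ϱ ^ (-(n:ℤ) - 1) * ((n:ℝ)*((n:ℝ)+1)*((n:ℝ)+2)/6)) :=
        mul_le_mul_of_nonneg_left hS (by positivity)
      refine step1.trans ?_
      have h2' : (0:ℝ) < (n₀:ℝ) + 2 := by linarith
      have hN : (n₀:ℝ) + 1 ≤ (n:ℝ) := by exact_mod_cast hle
      have key : c * ((n:ℝ)+2) ≤ 6*(n:ℝ) := by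
        rw [hc, div_mul_eq_mul_div, div_le_iff₀ h2']
        nlinarith [hA, hN]
      have coef : ((n:ℝ)^2)⁻¹ * (c^2*((n:ℝ)*((n:ℝ)+1)*((n:ℝ)+2)/6)) ≤ c*((n:ℝ)+1) := by
        have heq : ((n:ℝ)^2)⁻¹ * (c^2*((n:ℝ)*((n:ℝ)+1)*((n:ℝ)+2)/6))
            = c*((n:ℝ)+1) * (c*((n:ℝ)+2)/(6*(n:ℝ))) := by
          field_simp
        rw [heq]
        have hfrac : c*((n:ℝ)+2)/(6*(n:ℝ)) ≤ 1 := by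
          rw [div_le_one (by positivity)]; linarith [key]
        have := mul_le_mul_of_nonneg_left hfrac
          (by positivity : (0:ℝ) ≤ c*((n:ℝ)+1))
        simpa using this
      calc ((n:ℝ)^2)⁻¹ * (c^2 * ϱ ^ (-(n:ℤ) - 1) * ((n:ℝ)*((n:ℝ)+1)*((n:ℝ)+2)/6))
          = (((n:ℝ)^2)⁻¹ * (c^2*((n:ℝ)*((n:ℝ)+1)*((n:ℝ)+2)/6))) * ϱ ^ (-(n:ℤ) - 1) := by
            ring
        _ ≤ (c*((n:ℝ)+1)) * ϱ ^ (-(n:ℤ) - 1) := mul_le_mul_of_nonneg_right coef Rpos.le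
end

section
/- For every real number ρ ≠ 0, there is no sequence c : ℕ → ℝ with c 0 ≠ 0 satisfying, for all n ≥ 0 (with the convention c_{-1} = 0), the coefficient equations (n−2)(n−3)·c n − (n−3)^2 · c (n−1) = ρ · Σ_{j=0}^{n} c j · c (n−j). Equivalently, the differential equation ((1−Z)U'(Z))' = ρ · U(Z)^2 has no formal Laurent series solution U(Z) = Σ_{j ≥ 0} c j · Z^{j−2} whose leading coefficient c 0 is nonzero. -/
set_option maxHeartbeats 2000000 in
/-- Failure of the Frobenius method: for every `ρ ≠ 0`, the differential equation
`((1−Z)U'(Z))' = ρ U(Z)²` has no formal Laurent series solution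
`U(Z) = Σ_{j≥0} c j Z^{j−2}` with nonzero leading coefficient; equivalently, there is
no sequence `c` with `c 0 ≠ 0` satisfying the coefficient equations
`(n−2)(n−3) c n − (n−3)² c (n−1) = ρ Σ_{j=0}^n c j c (n−j)` (with `c_{-1} = 0`). -/
theorem frobenius_method_fails (ρ : ℝ) (hρ : ρ ≠ 0) :
    ¬ ∃ c : ℕ → ℝ, c 0 ≠ 0 ∧ ∀ n : ℕ,
      ((n : ℝ) - 2) * ((n : ℝ) - 3) * c n
        - ((n : ℝ) - 3) ^ 2 * (if n = 0 then 0 else c (n - 1))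
      = ρ * ∑ j ∈ Finset.range (n + 1), c j * c (n - j) := by
  rintro ⟨c, hc0, h⟩
  have e0 := h 0
  have e1 := h 1
  have e2 := h 2
  have e3 := h 3
  have e4 := h 4
  have e5 := h 5
  have e6 := h 6
  norm_num [Finset.sum_range_succ] at e0 e1 e2 e3 e4 e5 e6
  have e3' := e3.resolve_left hρ
  have hq : ρ * c 0 = 6 :=
    mul_left_cancel₀ hc0 (show c 0 * (ρ * c 0) = c 0 * 6 by linear_combination -e0)
  have h1' : c 0 * (c 1 - (-(2/5)) * c 0) = 0 := by
    linear_combination (c 0 / (-10)) * e1 + ((2 * c 0 * c 1) / (-10)) * hq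
  have hc1 : c 1 = -(2/5) * c 0 := by
    rcases mul_eq_zero.mp h1' with h' | h'
    · exact absurd h' hc0
    · linarith
  rw [hc1] at e2 e3' e4 e5 e6
  have h2' : c 0 * (c 2 - (-(7/150)) * c 0) = 0 := by
    linear_combination (c 0 / (-12)) * e2 + ((2 * c 0 * c 2 + (4/25) * c 0 ^ 2) / (-12)) * hq
  have hc2 : c 2 = -(7/150) * c 0 := by
    rcases mul_eq_zero.mp h2' with h' | h'
    · exact absurd h' hc0
    · linarith
  rw [hc2] at e3' e4 e5 e6
  have h3' : c 0 * (c 3 - (-(7/375)) * c 0) = 0 := by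
    linear_combination (1/2) * e3'
  have hc3 : c 3 = -(7/375) * c 0 := by
    rcases mul_eq_zero.mp h3' with h' | h'
    · exact absurd h' hc0
    · linarith
  rw [hc3] at e4 e5 e6
  have h4' : c 0 * (c 4 - (-(21/2500)) * c 0) = 0 := by
    linear_combination (c 0 / (-10)) * e4 + ((2 * c 0 * c 4 + (77/4500) * c 0 ^ 2) / (-10)) * hq
  have hc4 : c 4 = -(21/2500) * c 0 := by
    rcases mul_eq_zero.mp h4' with h' | h'
    · exact absurd h' hc0
    · linarith
  rw [hc4] at e5 e6
  have h5' : c 0 * (c 5 - (-(161/56250)) * c 0) = 0 := by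
    linear_combination (c 0 / (-6)) * e5 + ((2 * c 0 * c 5 + (238/28125) * c 0 ^ 2) / (-6)) * hq
  have hc5 : c 5 = -(161/56250) * c 0 := by
    rcases mul_eq_zero.mp h5' with h' | h'
    · exact absurd h' hc0
    · linarith
  rw [hc5] at e6
  have hsq : c 0 ^ 2 = 0 := by
    linear_combination (9375/49 * c 0) * e6 + (9375/49 * (2 * c 0 * c 6 + (77/22500) * c 0 ^ 2)) * hq
  exact hc0 (by nlinarith [hsq])
end

section
/- For every real number a > 1 and every integer k ≥ 1, ∫_0^∞ e^{−x} (1 + x/(k·a))^k dx ≤ a/(a−1). -/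
open MeasureTheory Set Real

lemma integral_exp_neg_b (b : ℝ) (hb : 0 < b) :
    ∫ x in Set.Ioi (0 : ℝ), Real.exp (-(b * x)) = b⁻¹ := by
  have := integral_comp_mul_left_Ioi (fun y => Real.exp (-y)) 0 hb
  simp only [mul_zero] at this
  rw [this, integral_exp_neg_Ioi_zero, smul_eq_mul, mul_one]

/-- For every real `a > 1` and integer `k ≥ 1`,
`∫_0^∞ e^{−x} (1 + x/(ka))^k dx ≤ a/(a−1)`. -/
theorem integral_exp_neg_mul_pow_le (a : ℝ) (ha : 1 < a) (k : ℕ) (hk : 1 ≤ k) :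
    ∫ x in Set.Ioi (0 : ℝ), Real.exp (-x) * (1 + x / (k * a)) ^ k ≤ a / (a - 1) := by
  have ha0 : (0:ℝ) < a := lt_trans one_pos ha
  have hk0 : (0:ℝ) < (k:ℝ) := by exact_mod_cast hk
  have hka : (0:ℝ) < (k:ℝ) * a := mul_pos hk0 ha0
  set b : ℝ := 1 - 1/a with hbdef
  have hb : 0 < b := by
    have h : 1/a < 1 := by rw [div_lt_one ha0]; exact ha
    rw [hbdef]; linarith
  have key : ∀ x ∈ Set.Ioi (0:ℝ),
      Real.exp (-x) * (1 + x / (k * a)) ^ k ≤ Real.exp (-(b * x)) := by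
    intro x hx
    have hx0 : 0 ≤ x := le_of_lt hx
    have h1 : (1 + x / (k * a)) ^ k ≤ Real.exp (x / (k * a)) ^ k := by
      apply pow_le_pow_left₀
      · positivity
      · rw [add_comm]; exact Real.add_one_le_exp _
    have h2 : Real.exp (x / (k * a)) ^ k = Real.exp (x / a) := by
      rw [← Real.exp_nat_mul]
      congr 1
      field_simp
    calc Real.exp (-x) * (1 + x / (k * a)) ^ k
        ≤ Real.exp (-x) * Real.exp (x / a) := by
          apply mul_le_mul_of_nonneg_left _ (Real.exp_pos _).le
          rw [← h2]; exact h1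
      _ = Real.exp (-(b * x)) := by
          rw [← Real.exp_add]; congr 1; rw [hbdef]; field_simp; ring
  have hint : IntegrableOn (fun x => Real.exp (-(b * x))) (Set.Ioi (0:ℝ)) := by
    simpa using exp_neg_integrableOn_Ioi 0 hb
  have h := integral_mono_of_nonneg (f := fun x => Real.exp (-x) * (1 + x / (k * a)) ^ k)
    (g := fun x => Real.exp (-(b * x))) ?_ hint ?_
  · calc ∫ x in Set.Ioi (0:ℝ), Real.exp (-x) * (1 + x / (k * a)) ^ k
        ≤ ∫ x in Set.Ioi (0:ℝ), Real.exp (-(b * x)) := h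
      _ = b⁻¹ := integral_exp_neg_b b hb
      _ = a / (a - 1) := by rw [hbdef]; field_simp
  · filter_upwards [ae_restrict_mem measurableSet_Ioi] with x hx
    have hx0 : (0:ℝ) ≤ x := le_of_lt hx
    positivity
  · filter_upwards [ae_restrict_mem measurableSet_Ioi] with x hx
    exact key x hx
end

section
/- ∫_0^∞ (4x³ + 1)^{−1/2} dx = (2^{1/3}/6) · Γ(1/6) · Γ(1/3) / Γ(1/2), where Γ is the real Gamma function. -/
open Real MeasureTheory Set

/-- Real Beta integral in terms of the real Gamma function. -/
lemma realBeta_aux {a b : ℝ} (ha : 0 < a) (hb : 0 < b) :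
    ∫ x in (0:ℝ)..1, x ^ (a - 1) * (1 - x) ^ (b - 1)
      = Real.Gamma a * Real.Gamma b / Real.Gamma (a + b) := by
  have key := Complex.Gamma_mul_Gamma_eq_betaIntegral
      (s := (a : ℂ)) (t := (b : ℂ)) (by simpa using ha) (by simpa using hb)
  have hbeta : Complex.betaIntegral a b
      = ((∫ x in (0:ℝ)..1, x ^ (a - 1) * (1 - x) ^ (b - 1) : ℝ) : ℂ) := by
    rw [Complex.betaIntegral, ← intervalIntegral.integral_ofReal]
    refine intervalIntegral.integral_congr fun x hx => ?_
    rw [uIcc_of_le zero_le_one] at hx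
    rw [Complex.ofReal_mul, Complex.ofReal_cpow hx.1,
      Complex.ofReal_cpow (by linarith [hx.2] : (0:ℝ) ≤ 1 - x)]
    push_cast
    ring
  have hne : Real.Gamma (a + b) ≠ 0 := (Real.Gamma_pos_of_pos (by linarith)).ne'
  rw [hbeta, ← Complex.ofReal_add, Complex.Gamma_ofReal, Complex.Gamma_ofReal,
    Complex.Gamma_ofReal, ← Complex.ofReal_mul, ← Complex.ofReal_mul] at key
  have h := Complex.ofReal_inj.mp key
  rw [eq_div_iff hne]
  linear_combination -h

/-- The dominant singularity of the `ν = 2` Tjon–Wu solution: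
`∫_0^∞ dx/√(4x³+1) = (2^{1/3}/6) · Γ(1/6) Γ(1/3) / Γ(1/2)`. -/
theorem integral_inv_sqrt_four_cube_add_one :
    ∫ x in Set.Ioi (0 : ℝ), (Real.sqrt (4 * x ^ 3 + 1))⁻¹
      = (2 : ℝ) ^ ((1 : ℝ) / 3) / 6
        * Real.Gamma (1 / 6) * Real.Gamma (1 / 3) / Real.Gamma (1 / 2) := by
  set f : ℝ → ℝ := fun x => (4 * x ^ 3 + 1)⁻¹ with hf
  set f' : ℝ → ℝ := fun x => -(12 * x ^ 2) / (4 * x ^ 3 + 1) ^ 2 with hf'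
  set g : ℝ → ℝ := fun u => u ^ ((1:ℝ)/6 - 1) * (1 - u) ^ ((1:ℝ)/3 - 1) with hg
  -- derivative
  have hderiv : ∀ x ∈ Ioi (0:ℝ), HasDerivWithinAt f (f' x) (Ioi 0) x := by
    intro x hx
    have hx' : (0:ℝ) < x := hx
    have h1 : HasDerivAt (fun x : ℝ => 4 * x ^ 3 + 1) (12 * x ^ 2) x := by
      have := ((hasDerivAt_pow 3 x).const_mul 4).add_const 1
      refine this.congr_deriv ?_
      push_cast
      ring
    have hne : 4 * x ^ 3 + 1 ≠ 0 := by nlinarith [pow_pos hx' 3]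
    exact (h1.inv hne).hasDerivWithinAt
  -- cube root cancellation helper
  have hcbrt : ∀ t : ℝ, 0 ≤ t → (t ^ 3) ^ ((1:ℝ)/3) = t := by
    intro t ht
    rw [← Real.rpow_natCast t 3, ← Real.rpow_mul ht]
    norm_num
  -- injectivity
  have hinj : InjOn f (Ioi 0) := by
    intro x hx y hy hxy
    have hx' : (0:ℝ) < x := hx
    have hy' : (0:ℝ) < y := hy
    have h1 : 4 * x ^ 3 + 1 = 4 * y ^ 3 + 1 := inv_injective hxy
    have h3 : x ^ 3 = y ^ 3 := by linarith
    calc x = (x ^ 3) ^ ((1:ℝ)/3) := (hcbrt x hx'.le).symm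
      _ = (y ^ 3) ^ ((1:ℝ)/3) := by rw [h3]
      _ = y := hcbrt y hy'.le
  -- image
  have himg : f '' Ioi 0 = Ioo 0 1 := by
    ext u
    constructor
    · rintro ⟨x, hx, rfl⟩
      have hx' : (0:ℝ) < x := hx
      have hA : (1:ℝ) < 4 * x ^ 3 + 1 := by nlinarith [pow_pos hx' 3]
      exact ⟨inv_pos.2 (by linarith), inv_lt_one_of_one_lt₀ hA⟩
    · rintro ⟨hu0, hu1⟩
      have hc : (0:ℝ) < (1 - u) / (4 * u) := by
        apply div_pos <;> linarith
      refine ⟨((1 - u) / (4 * u)) ^ ((1:ℝ)/3), Real.rpow_pos_of_pos hc _, ?_⟩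
      have hcube : (((1 - u) / (4 * u)) ^ ((1:ℝ)/3)) ^ 3 = (1 - u) / (4 * u) := by
        rw [← Real.rpow_natCast (((1 - u) / (4 * u)) ^ ((1:ℝ)/3)) 3,
          ← Real.rpow_mul hc.le]
        norm_num
      show (4 * (((1 - u) / (4 * u)) ^ ((1:ℝ)/3)) ^ 3 + 1)⁻¹ = u
      rw [hcube]
      have hu0' : u ≠ 0 := ne_of_gt hu0
      have h4 : 4 * ((1 - u) / (4 * u)) + 1 = u⁻¹ := by
        field_simp
        ring
      rw [h4, inv_inv]
  -- change of variables
  have key : ∫ u in Ioo (0:ℝ) 1, g u = ∫ x in Ioi (0:ℝ), |f' x| • g (f x) :=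
    himg ▸ integral_image_eq_integral_abs_deriv_smul measurableSet_Ioi hderiv hinj g
  -- pointwise identification of the transformed integrand
  have hpt : ∀ x ∈ Ioi (0:ℝ),
      |f' x| • g (f x) = 12 * (4:ℝ) ^ (-(2/3):ℝ) * (Real.sqrt (4 * x ^ 3 + 1))⁻¹ := by
    intro x hx
    have hx' : (0:ℝ) < x := hx
    have hA : (0:ℝ) < 4 * x ^ 3 + 1 := by nlinarith [pow_pos hx' 3]
    have hAne : (4 * x ^ 3 + 1) ≠ 0 := hA.ne'
    have habs : |f' x| = 12 * x ^ 2 * ((4 * x ^ 3 + 1) ^ 2)⁻¹ := by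
      rw [hf']
      simp only
      rw [abs_div, abs_neg, abs_of_nonneg (by positivity : (0:ℝ) ≤ 12 * x ^ 2),
        abs_of_nonneg (by positivity : (0:ℝ) ≤ (4 * x ^ 3 + 1) ^ 2), div_eq_mul_inv]
    have e0 : (1:ℝ) - (4 * x ^ 3 + 1)⁻¹ = 4 * x ^ 3 * (4 * x ^ 3 + 1)⁻¹ := by
      field_simp
      ring
    have e1 : ((4 * x ^ 3 + 1)⁻¹) ^ ((1:ℝ)/6 - 1)
        = (4 * x ^ 3 + 1) ^ (-((1:ℝ)/6 - 1)) := by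
      rw [Real.inv_rpow hA.le, ← Real.rpow_neg hA.le]
    have e2 : (4 * x ^ 3 * (4 * x ^ 3 + 1)⁻¹) ^ ((1:ℝ)/3 - 1)
        = (4:ℝ) ^ ((1:ℝ)/3 - 1) * (x ^ 2)⁻¹ * (4 * x ^ 3 + 1) ^ (-((1:ℝ)/3 - 1)) := by
      rw [Real.mul_rpow (by positivity) (by positivity),
        Real.mul_rpow (by positivity) (by positivity),
        Real.inv_rpow hA.le, ← Real.rpow_neg hA.le]
      have hx3 : (x ^ 3 : ℝ) ^ ((1:ℝ)/3 - 1) = (x ^ 2)⁻¹ := by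
        rw [← Real.rpow_natCast x 3, ← Real.rpow_mul hx'.le,
          show ((3:ℕ):ℝ) * ((1:ℝ)/3 - 1) = -((2:ℕ):ℝ) by push_cast; norm_num,
          Real.rpow_neg hx'.le, Real.rpow_natCast]
      rw [hx3]
    have hsqrt : (Real.sqrt (4 * x ^ 3 + 1))⁻¹ = (4 * x ^ 3 + 1) ^ (-((1:ℝ)/2)) := by
      rw [Real.sqrt_eq_rpow, ← Real.rpow_neg hA.le]
    have hA2 : ((4 * x ^ 3 + 1) ^ 2 : ℝ)⁻¹ = (4 * x ^ 3 + 1) ^ ((-2:ℝ)) := by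
      rw [show ((-2):ℝ) = -((2:ℕ):ℝ) by norm_num, Real.rpow_neg hA.le, Real.rpow_natCast]
    have hApow : (4 * x ^ 3 + 1) ^ ((-2:ℝ)) * ((4 * x ^ 3 + 1) ^ (-((1:ℝ)/6 - 1))
        * (4 * x ^ 3 + 1) ^ (-((1:ℝ)/3 - 1))) = (4 * x ^ 3 + 1) ^ (-((1:ℝ)/2)) := by
      rw [← Real.rpow_add hA, ← Real.rpow_add hA]
      norm_num
    have hconst : ((4:ℝ)) ^ ((1:ℝ)/3 - 1) = (4:ℝ) ^ (-(2/3):ℝ) := by norm_num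
    rw [smul_eq_mul, habs, hg]
    simp only
    rw [hf]
    simp only
    rw [e0, e1, e2, hsqrt, hA2, hconst]
    have hxne : (x ^ 2 : ℝ) ≠ 0 := by positivity
    calc 12 * x ^ 2 * (4 * x ^ 3 + 1) ^ ((-2:ℝ))
          * ((4 * x ^ 3 + 1) ^ (-((1:ℝ)/6 - 1))
            * ((4:ℝ) ^ (-(2/3):ℝ) * (x ^ 2)⁻¹ * (4 * x ^ 3 + 1) ^ (-((1:ℝ)/3 - 1))))
        = 12 * (4:ℝ) ^ (-(2/3):ℝ) * (x ^ 2 * (x ^ 2)⁻¹)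
          * ((4 * x ^ 3 + 1) ^ ((-2:ℝ)) * ((4 * x ^ 3 + 1) ^ (-((1:ℝ)/6 - 1))
            * (4 * x ^ 3 + 1) ^ (-((1:ℝ)/3 - 1)))) := by ring
      _ = 12 * (4:ℝ) ^ (-(2/3):ℝ) * (4 * x ^ 3 + 1) ^ (-((1:ℝ)/2)) := by
          rw [mul_inv_cancel₀ hxne, hApow, mul_one]
  -- rewrite RHS of key
  have key2 : ∫ x in Ioi (0:ℝ), |f' x| • g (f x)
      = 12 * (4:ℝ) ^ (-(2/3):ℝ) * ∫ x in Ioi (0:ℝ), (Real.sqrt (4 * x ^ 3 + 1))⁻¹ := by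
    rw [← integral_const_mul]
    exact setIntegral_congr_fun measurableSet_Ioi hpt
  -- Beta value
  have hbeta : ∫ u in Ioo (0:ℝ) 1, g u
      = Real.Gamma (1/6) * Real.Gamma (1/3) / Real.Gamma (1/2) := by
    rw [← integral_Ioc_eq_integral_Ioo, ← intervalIntegral.integral_of_le zero_le_one, hg]
    have := realBeta_aux (a := 1/6) (b := 1/3) (by norm_num) (by norm_num)
    rw [show (1:ℝ)/6 + 1/3 = 1/2 by norm_num] at this
    exact this
  -- constants
  have hc : 12 * (4:ℝ) ^ (-(2/3):ℝ) * ((2:ℝ) ^ ((1:ℝ)/3) / 6) = 1 := by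
    have h4 : (4:ℝ) ^ (-(2/3):ℝ) = (2:ℝ) ^ (-(4/3):ℝ) := by
      rw [show (4:ℝ) = (2:ℝ) ^ ((2:ℕ):ℝ) by
          rw [Real.rpow_natCast]; norm_num,
        ← Real.rpow_mul (by norm_num : (0:ℝ) ≤ 2)]
      norm_num
    rw [h4]
    have : (2:ℝ) ^ (-(4/3):ℝ) * (2:ℝ) ^ ((1:ℝ)/3) = (2:ℝ) ^ (-(1:ℝ)) := by
      rw [← Real.rpow_add (by norm_num : (0:ℝ) < 2)]
      norm_num
    calc 12 * (2:ℝ) ^ (-(4/3):ℝ) * ((2:ℝ) ^ ((1:ℝ)/3) / 6)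
        = 2 * ((2:ℝ) ^ (-(4/3):ℝ) * (2:ℝ) ^ ((1:ℝ)/3)) := by ring
      _ = 2 * (2:ℝ) ^ (-(1:ℝ)) := by rw [this]
      _ = 1 := by rw [Real.rpow_neg_one]; norm_num
  have H : 12 * (4:ℝ) ^ (-(2/3):ℝ)
      * ∫ x in Ioi (0:ℝ), (Real.sqrt (4 * x ^ 3 + 1))⁻¹
      = Real.Gamma (1/6) * Real.Gamma (1/3) / Real.Gamma (1/2) := by
    rw [← key2, ← key, hbeta]
  calc ∫ x in Ioi (0:ℝ), (Real.sqrt (4 * x ^ 3 + 1))⁻¹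
      = (12 * (4:ℝ) ^ (-(2/3):ℝ) * ((2:ℝ) ^ ((1:ℝ)/3) / 6))
        * ∫ x in Ioi (0:ℝ), (Real.sqrt (4 * x ^ 3 + 1))⁻¹ := by rw [hc, one_mul]
    _ = ((2:ℝ) ^ ((1:ℝ)/3) / 6)
        * (12 * (4:ℝ) ^ (-(2/3):ℝ) * ∫ x in Ioi (0:ℝ), (Real.sqrt (4 * x ^ 3 + 1))⁻¹) := by
          ring
    _ = ((2:ℝ) ^ ((1:ℝ)/3) / 6)
        * (Real.Gamma (1/6) * Real.Gamma (1/3) / Real.Gamma (1/2)) := by rw [H]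
    _ = (2:ℝ) ^ ((1:ℝ)/3) / 6
        * Real.Gamma (1/6) * Real.Gamma (1/3) / Real.Gamma (1/2) := by ring
end

section
/- Let d ≥ 2 be an integer and let p : ℕ → ℚ be defined by p 0 = 1 and p n = n^{-d} · Σ_{0 ≤ j < n} p j · p (n-1-j) for n ≥ 1, and let P = Σ_{n ≥ 0} p n · X^n be the associated formal power series over ℚ. Then applying the operator Q ↦ X · Q' (multiplication by X after formal derivative) d times to P yields X · P^2; i.e., (X·d/dX)^d P = X · P². -/
open PowerSeries

lemma coeff_X_mul_derivative (Q : PowerSeries ℚ) (n : ℕ) :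
    (PowerSeries.coeff n) (PowerSeries.X * PowerSeries.derivative ℚ Q)
      = (n : ℚ) * (PowerSeries.coeff n) Q := by
  cases n with
  | zero => simp
  | succ m =>
    rw [PowerSeries.coeff_succ_X_mul, PowerSeries.coeff_derivative]
    push_cast
    ring

lemma coeff_iter (k : ℕ) (Q : PowerSeries ℚ) (n : ℕ) :
    (PowerSeries.coeff n)
      ((fun Q : PowerSeries ℚ => PowerSeries.X * PowerSeries.derivative ℚ Q)^[k] Q)
      = (n : ℚ) ^ k * (PowerSeries.coeff n) Q := by
  induction k generalizing Q with
  | zero => simp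
  | succ m ih =>
    rw [Function.iterate_succ_apply, ih, coeff_X_mul_derivative]
    ring

/-- The generating function `P` of the probability that `d` random binary search trees
are all equal satisfies the order-`d` formal differential equation `(X·d/dX)^d P = X·P²`. -/
theorem d_bst_equality_gf_ode
    (d : ℕ) (hd : 2 ≤ d)
    (p : ℕ → ℚ) (hp0 : p 0 = 1)
    (hrec : ∀ n : ℕ, 1 ≤ n →
      p n = ((n : ℚ) ^ d)⁻¹ * ∑ j ∈ Finset.range n, p j * p (n - 1 - j)) :
    (fun Q : PowerSeries ℚ => PowerSeries.X * PowerSeries.derivative ℚ Q)^[d]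
        (PowerSeries.mk p)
      = PowerSeries.X * (PowerSeries.mk p) ^ 2 := by
  ext n
  rw [coeff_iter]
  cases n with
  | zero =>
    simp [zero_pow (by omega : d ≠ 0)]
  | succ m =>
    rw [PowerSeries.coeff_succ_X_mul, PowerSeries.coeff_mk, sq, PowerSeries.coeff_mul,
      Finset.Nat.sum_antidiagonal_eq_sum_range_succ (fun i j => (PowerSeries.coeff i)
        (PowerSeries.mk p) * (PowerSeries.coeff j) (PowerSeries.mk p))]
    simp only [PowerSeries.coeff_mk]
    have h := hrec (m + 1) (by omega)
    have hne : ((m + 1 : ℕ) : ℚ) ^ d ≠ 0 := by positivity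
    rw [h, ← mul_assoc, mul_inv_cancel₀ hne, one_mul]
    apply Finset.sum_congr rfl
    intro j _
    congr 1
end

section
/- For an integer d ≥ 1 define Φ_d : ℝ → ℝ by Φ_d(r) = ∏_{j=d}^{2d−1} (j − r) − (2d)!/d!. Then Φ_d(−1) = 0 for every d. Moreover, if d is odd then r = −1 is the only real zero of Φ_d, while if d is even then the set of real zeros of Φ_d is exactly {−1, 3d}. -/
open Finset

/-- The resonance polynomial `Φ_d(r) = ∏_{j=d}^{2d−1}(j−r) − (2d)!/d!` of the
differential equation for `d` random binary search trees. -/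
noncomputable def resonancePolyBST (d : ℕ) (r : ℝ) : ℝ :=
  (∏ j ∈ Finset.Icc d (2 * d - 1), ((j : ℝ) - r)) - ((2 * d).factorial : ℝ) / (d.factorial : ℝ)

private lemma fact_prod_aux (a b : ℕ) (h : a ≤ b + 1) :
    a.factorial * ∏ j ∈ Icc a b, (j + 1) = (b + 1).factorial := by
  induction b with
  | zero => interval_cases a <;> simp
  | succ n ih =>
    rcases Nat.lt_or_ge a (n + 2) with h' | h'
    · rw [Finset.prod_Icc_succ_top (by omega), ← mul_assoc, ih (by omega)]
      exact (mul_comm _ _).trans (Nat.factorial_succ _).symm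
    · have ha : a = n + 2 := by omega
      subst ha
      rw [Finset.Icc_eq_empty (by omega)]
      simp

/-- `Φ_d(−1) = 0` for every `d ≥ 1`; if `d` is odd then `−1` is the only real zero of
`Φ_d`, and if `d` is even then the real zeros of `Φ_d` are exactly `−1` and `3d`. -/
theorem resonancePolyBST_zeros (d : ℕ) (hd : 1 ≤ d) :
    resonancePolyBST d (-1) = 0
    ∧ (Odd d → ∀ r : ℝ, resonancePolyBST d r = 0 → r = -1)
    ∧ (Even d → {r : ℝ | resonancePolyBST d r = 0} = {-1, (3 * d : ℝ)}) := by
  set s : Finset ℕ := Icc d (2 * d - 1) with hs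
  have hcard : s.card = d := by rw [hs, Nat.card_Icc]; omega
  have hne : s.Nonempty := by
    rw [hs]; exact Finset.nonempty_Icc.2 (by omega)
  have hmem : ∀ j ∈ s, (d : ℝ) ≤ (j : ℝ) ∧ (j : ℝ) ≤ 2 * (d : ℝ) - 1 := by
    intro j hj
    rw [hs, Finset.mem_Icc] at hj
    refine ⟨by exact_mod_cast hj.1, ?_⟩
    have h1 : (j : ℝ) ≤ ((2 * d - 1 : ℕ) : ℝ) := by exact_mod_cast hj.2
    rwa [Nat.cast_sub (by omega), Nat.cast_mul, Nat.cast_ofNat, Nat.cast_one] at h1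
  set C : ℝ := ∏ j ∈ s, ((j : ℝ) + 1) with hCdef
  have hdr : (1 : ℝ) ≤ (d : ℝ) := by exact_mod_cast hd
  have hC : ((2 * d).factorial : ℝ) / (d.factorial : ℝ) = C := by
    have h1 := fact_prod_aux d (2 * d - 1) (by omega)
    rw [show 2 * d - 1 + 1 = 2 * d by omega] at h1
    have h2 : (d.factorial : ℝ) * ∏ j ∈ s, ((j : ℝ) + 1) = ((2 * d).factorial : ℝ) := by
      exact_mod_cast congrArg (Nat.cast (R := ℝ)) h1
    rw [div_eq_iff (by exact_mod_cast d.factorial_pos.ne'), ← h2, hCdef]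
    ring
  set f : ℝ → ℝ := fun r => ∏ j ∈ s, ((j : ℝ) - r) with hfdef
  have hΦ : ∀ r, resonancePolyBST d r = f r - C := by
    intro r; rw [resonancePolyBST, hC]
  have hfC : f (-1) = C := by
    rw [hfdef, hCdef]
    exact Finset.prod_congr rfl fun j _ => by ring
  have hCpos : 0 < C := Finset.prod_pos fun j hj => by positivity
  have hzero : resonancePolyBST d (-1) = 0 := by rw [hΦ, hfC, sub_self]
  -- strict antitonicity on (-∞, d)
  have hanti : ∀ r1 r2 : ℝ, r1 < r2 → r2 < d → f r2 < f r1 := by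
    intro r1 r2 h12 h2d
    refine Finset.prod_lt_prod_of_nonempty ?_ ?_ hne
    · intro j hj; have := (hmem j hj).1; linarith
    · intro j hj; linarith
  have hleft : ∀ r : ℝ, r < d → f r = C → r = -1 := by
    intro r hr hfr
    by_contra hne1
    have hm1 : (-1 : ℝ) < d := by linarith
    rcases lt_or_gt_of_ne hne1 with h | h
    · have := hanti r (-1) h hm1; rw [hfC, hfr] at this; exact lt_irrefl _ this
    · have := hanti (-1) r h hr; rw [hfC, hfr] at this; exact lt_irrefl _ this
  -- middle region: |f r| < C
  have hmid : ∀ r : ℝ, (d : ℝ) ≤ r → r ≤ 2 * d - 1 → f r ≠ C := by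
    intro r hr1 hr2
    have habs : |f r| ≤ ((d : ℝ) - 1) ^ d := by
      rw [hfdef]
      calc |∏ j ∈ s, ((j : ℝ) - r)| = ∏ j ∈ s, |(j : ℝ) - r| := Finset.abs_prod _ _
        _ ≤ ∏ _j ∈ s, ((d : ℝ) - 1) := by
            refine Finset.prod_le_prod (fun j _ => abs_nonneg _) ?_
            intro j hj
            obtain ⟨h1, h2⟩ := hmem j hj
            rw [abs_sub_le_iff]
            constructor <;> linarith
        _ = ((d : ℝ) - 1) ^ d := by rw [Finset.prod_const, hcard]
    have hpow : ((d : ℝ) - 1) ^ d < ((d : ℝ) + 1) ^ d :=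
      pow_lt_pow_left₀ (by linarith) (by linarith) (by omega)
    have hCge : ((d : ℝ) + 1) ^ d ≤ C := by
      have hc : (∏ _j ∈ s, ((d : ℝ) + 1)) = ((d : ℝ) + 1) ^ d := by
        rw [Finset.prod_const, hcard]
      rw [hCdef, ← hc]
      refine Finset.prod_le_prod (fun j _ => by linarith) ?_
      intro j hj; have := (hmem j hj).1; linarith
    have : f r < C := lt_of_le_of_lt (le_trans (le_abs_self _) habs)
      (lt_of_lt_of_le hpow hCge)
    exact ne_of_lt this
  -- sign rewrites
  have hflip : ∀ r : ℝ, f r = (-1 : ℝ) ^ d * ∏ j ∈ s, (r - (j : ℝ)) := by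
    intro r
    rw [hfdef, ← hcard]
    simp only []
    rw [← Finset.prod_const, ← Finset.prod_mul_distrib]
    exact Finset.prod_congr rfl fun j _ => by ring
  have hrpos : ∀ r : ℝ, 2 * (d : ℝ) - 1 < r → 0 < ∏ j ∈ s, (r - (j : ℝ)) := by
    intro r hr
    refine Finset.prod_pos fun j hj => ?_
    have := (hmem j hj).2; linarith
  -- reflection: ∏ (3d - j) = C
  have hreflect : (∏ j ∈ s, (3 * (d : ℝ) - (j : ℝ))) = C := by
    rw [hCdef, hs]
    refine Finset.prod_nbij' (fun j => 3 * d - 1 - j) (fun j => 3 * d - 1 - j)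
      ?_ ?_ ?_ ?_ ?_
    · intro a ha; simp only [Finset.mem_Icc] at ha ⊢; omega
    · intro a ha; simp only [Finset.mem_Icc] at ha ⊢; omega
    · intro a ha; simp only [Finset.mem_Icc] at ha; omega
    · intro a ha; simp only [Finset.mem_Icc] at ha; omega
    · intro a ha
      rw [Finset.mem_Icc] at ha
      have : ((3 * d - 1 - a : ℕ) : ℝ) = 3 * (d : ℝ) - 1 - a := by
        rw [Nat.cast_sub (by omega), Nat.cast_sub (by omega)]
        push_cast; ring
      rw [this]; ring
  have h3d : 2 * (d : ℝ) - 1 < 3 * d := by linarith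
  refine ⟨hzero, ?_, ?_⟩
  · -- odd case
    intro hodd r hr
    rw [hΦ, sub_eq_zero] at hr
    rcases lt_or_ge r (d : ℝ) with h | h
    · exact hleft r h hr
    · rcases le_or_gt r (2 * (d : ℝ) - 1) with h2 | h2
      · exact absurd hr (hmid r h h2)
      · exfalso
        have : f r < 0 := by
          rw [hflip, hodd.neg_one_pow]
          have := hrpos r h2
          nlinarith
        linarith [hr ▸ this, hCpos]
  · -- even case
    intro heven
    have hfeq : ∀ r : ℝ, f r = ∏ j ∈ s, (r - (j : ℝ)) := by
      intro r; rw [hflip, heven.neg_one_pow, one_mul]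
    have hmono : ∀ r1 r2 : ℝ, 2 * (d : ℝ) - 1 < r1 → r1 < r2 → f r1 < f r2 := by
      intro r1 r2 h1 h12
      rw [hfeq, hfeq]
      refine Finset.prod_lt_prod_of_nonempty ?_ ?_ hne
      · intro j hj; have := (hmem j hj).2; linarith
      · intro j hj; linarith
    have hf3d : f (3 * d) = C := by
      rw [hfeq, ← hreflect]
    ext r
    simp only [Set.mem_setOf_eq, Set.mem_insert_iff, Set.mem_singleton_iff]
    constructor
    · intro hr
      rw [hΦ, sub_eq_zero] at hr
      rcases lt_or_ge r (d : ℝ) with h | h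
      · exact Or.inl (hleft r h hr)
      · rcases le_or_gt r (2 * (d : ℝ) - 1) with h2 | h2
        · exact absurd hr (hmid r h h2)
        · right
          by_contra hne3
          rcases lt_or_gt_of_ne hne3 with h3 | h3
          · have := hmono r (3 * d) h2 h3
            rw [hr, hf3d] at this; exact lt_irrefl _ this
          · have := hmono (3 * d) r h3d h3
            rw [hr, hf3d] at this; exact lt_irrefl _ this
    · rintro (rfl | rfl)
      · exact hzero
      · rw [hΦ, hf3d, sub_self]
end

section
/- Let m ≥ 2 be an integer and let q : ℕ → ℚ be defined by q j = 1 for 0 ≤ j ≤ m−2 and q n = binom(n, m−1)^{-2} · Σ_{j₁+⋯+j_m = n−m+1, j_i ≥ 0} q j₁ ⋯ q j_m for n ≥ m−1, and let Q = Σ_{n ≥ 0} q n · X^n be the associated formal power series over ℚ. Then the (m−1)-st formal derivative of ( X^{m−1} · Q^{(m−1)} ) equals (m−1)!² · Q^m, where Q^{(m−1)} is the (m−1)-st formal derivative of Q. -/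
open PowerSeries

private lemma coeff_iterate_derivative (k : ℕ) (F : PowerSeries ℚ) (n : ℕ) :
    PowerSeries.coeff n ((fun G : PowerSeries ℚ => PowerSeries.derivative ℚ G)^[k] F)
      = PowerSeries.coeff (n + k) F * ((n + k).descFactorial k : ℚ) := by
  induction k generalizing F with
  | zero => simp
  | succ k ih =>
    rw [Function.iterate_succ_apply, ih, PowerSeries.coeff_derivative,
      show n + (k + 1) = (n + k) + 1 from rfl, Nat.succ_descFactorial_succ]
    push_cast
    ring

private lemma sum_antidiag_eq (m n : ℕ) (f : PowerSeries ℚ) :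
    PowerSeries.coeff n (f ^ m)
      = ∑ j ∈ Finset.Nat.antidiagonalTuple m n, ∏ i : Fin m, PowerSeries.coeff (j i) f := by
  rw [PowerSeries.coeff_pow]
  refine Finset.sum_nbij' (fun l => fun i : Fin m => l i.val)
    (fun j => Finsupp.onFinset (Finset.range m)
      (fun i => if h : i < m then j ⟨i, h⟩ else 0) ?_) ?_ ?_ ?_ ?_ ?_
  · intro i hi
    rw [Finset.mem_range]
    by_contra h
    simp [h] at hi
  · intro l hl
    simp only [Finset.mem_finsuppAntidiag] at hl
    rw [Finset.Nat.mem_antidiagonalTuple, ← hl.1, Fin.sum_univ_eq_sum_range]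
  · intro j hj
    rw [Finset.Nat.mem_antidiagonalTuple] at hj
    simp only [Finset.mem_finsuppAntidiag]
    constructor
    · rw [← hj, Finset.sum_range fun i => _]
      simp only [Finsupp.onFinset_apply]
      exact Finset.sum_congr rfl fun i _ => by simp [i.isLt]
    · exact Finsupp.support_onFinset_subset
  · intro l hl
    simp only [Finset.mem_finsuppAntidiag] at hl
    ext i
    simp only [Finsupp.onFinset_apply]
    by_cases h : i < m
    · simp [h]
    · simp only [h, dif_neg, not_false_iff]
      by_contra h2
      have := hl.2 (Finsupp.mem_support_iff.2 (Ne.symm h2))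
      rw [Finset.mem_range] at this
      exact h this
  · intro j hj
    ext i
    simp [i.isLt]
  · intro l hl
    exact (Fin.prod_univ_eq_prod_range (fun i => PowerSeries.coeff (l i) f) m).symm

/-- The generating function `Q` of the probability that two random `m`-ary search trees
are identical satisfies `(X^{m−1} Q^{(m−1)})^{(m−1)} = (m−1)!² Q^m` as formal power
series. -/
theorem mary_equality_gf_ode
    (m : ℕ) (hm : 2 ≤ m)
    (q : ℕ → ℚ) (hinit : ∀ j : ℕ, j ≤ m - 2 → q j = 1)
    (hrec : ∀ n : ℕ, m - 1 ≤ n →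
      q n = ((n.choose (m - 1) : ℚ) ^ 2)⁻¹ *
        ∑ j ∈ Finset.Nat.antidiagonalTuple m (n + 1 - m), ∏ i : Fin m, q (j i)) :
    (fun F : PowerSeries ℚ => PowerSeries.derivative ℚ F)^[m - 1]
        (PowerSeries.X ^ (m - 1)
          * (fun F : PowerSeries ℚ => PowerSeries.derivative ℚ F)^[m - 1] (PowerSeries.mk q))
      = PowerSeries.C (((m - 1).factorial : ℚ) ^ 2) * (PowerSeries.mk q) ^ m := by
  set d := m - 1 with hd
  have hmd : m = d + 1 := by omega
  ext n
  rw [coeff_iterate_derivative, PowerSeries.coeff_C_mul,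
    sum_antidiag_eq m n (PowerSeries.mk q),
    PowerSeries.coeff_X_pow_mul _ d n, coeff_iterate_derivative, PowerSeries.coeff_mk]
  have hrec' := hrec (n + d) (by omega)
  have hidx : n + d + 1 - m = n := by omega
  rw [hidx] at hrec'
  simp only [PowerSeries.coeff_mk] at *
  rw [hrec']
  have hdesc : ((n + d).descFactorial d : ℚ) = (d.factorial : ℚ) * ((n + d).choose d : ℚ) := by
    rw_mod_cast [Nat.descFactorial_eq_factorial_mul_choose]
  have hch : ((n + d).choose d : ℚ) ≠ 0 := by
    exact_mod_cast Nat.choose_pos (by omega) |>.ne'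
  rw [hdesc]
  field_simp
end

section
/- For an integer m ≥ 2 define Ψ_m : ℝ → ℝ by Ψ_m(r) = ∏_{j=2}^{2m−1} (r − j) − (2m)!/2. Then Ψ_m(−1) = 0 and Ψ_m(2m+2) = 0, and the set of real zeros of Ψ_m is exactly {−1, 2m+2}. -/
open Finset

open Finset

private lemma prodIoc_id (n : ℕ) : (∏ x ∈ Finset.Ioc 0 n, x) = n.factorial := by
  rw [← Finset.Icc_add_one_left_eq_Ioc, ← Finset.Ico_add_one_right_eq_Icc]
  exact Finset.prod_Ico_id_eq_factorial n

private lemma prod_chunk {a b : ℕ} (h : a ≤ b) :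
    a.factorial * (∏ x ∈ Finset.Ioc a b, x) = b.factorial := by
  rw [← prodIoc_id a, ← prodIoc_id b, Finset.prod_Ioc_consecutive _ (Nat.zero_le a) h]

private lemma factMul (a b : ℕ) (ha : 1 ≤ a) :
    a.factorial * (b+1).factorial ≤ (a+b).factorial := by
  induction b with
  | zero => simp [Nat.factorial]
  | succ n ih =>
      have h1 : a.factorial * (n+1+1).factorial
          = (a.factorial * (n+1).factorial) * (n+2) := by
        rw [Nat.factorial_succ]; ring
      calc a.factorial * (n+1+1).factorial
          = (a.factorial * (n+1).factorial) * (n+2) := h1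
        _ ≤ (a+n).factorial * (n+2) := Nat.mul_le_mul_right _ ih
        _ ≤ (a+n).factorial * (a+n+1) := by
            exact Nat.mul_le_mul_left _ (by omega)
        _ = (a+(n+1)).factorial := by
            rw [show a+(n+1) = (a+n)+1 by omega, Nat.factorial_succ]; ring


-- reversal product: ∏_{j=2}^{n} (n+2-j) = n!
private lemma N4 (n : ℕ) (hn : 1 ≤ n) : (∏ j ∈ Finset.Ioc 1 n, (n+2-j)) = n.factorial := by
  have h : (∏ j ∈ Finset.Ioc 1 n, (n+2-j)) = ∏ j ∈ Finset.Ioc 1 n, j := by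
    refine Finset.prod_nbij' (fun j => n+2-j) (fun j => n+2-j) ?_ ?_ ?_ ?_ ?_ <;>
      intro a ha <;> simp only [Finset.mem_Ioc] at * <;> omega
  rw [h]
  have h2 := prod_chunk hn
  simpa [Nat.factorial] using h2

-- ∏_{j=a+1}^{a+d} (j-a+1) = (d+1)!
private lemma N5 (a d : ℕ) : (∏ j ∈ Finset.Ioc a (a+d), (j-a+1)) = (d+1).factorial := by
  induction d with
  | zero => simp [Nat.factorial]
  | succ n ih =>
      rw [show a+(n+1) = (a+n)+1 by omega,
          Finset.prod_Ioc_succ_top (by omega : a ≤ a+n), ih,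
          show (a+n)+1-a+1 = n+2 by omega, show n+1+1 = n+2 by omega,
          Nat.factorial_succ (n+1)]
      ring

private lemma N3 (p : ℕ) :
    p.factorial * (∏ j ∈ Finset.Ioc 1 (p+2), (2*p+3-j)) = (2*p+1).factorial := by
  have h : (∏ j ∈ Finset.Ioc 1 (p+2), (2*p+3-j)) = ∏ j ∈ Finset.Ioc p (2*p+1), j := by
    refine Finset.prod_nbij' (fun j => 2*p+3-j) (fun j => 2*p+3-j) ?_ ?_ ?_ ?_ ?_ <;>
      intro a ha <;> simp only [Finset.mem_Ioc] at * <;> omega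
  rw [h]; exact prod_chunk (by omega)

private lemma key2N (p : ℕ) :
    (∏ j ∈ Finset.Ioc 1 (p+2), ((j+1) * (2*p+6-j))) * 2 = (2*p+4).factorial := by
  rw [Finset.prod_mul_distrib]
  have hX : 2 * (∏ j ∈ Finset.Ioc 1 (p+2), (j+1)) = (p+3).factorial := by
    have h : (∏ j ∈ Finset.Ioc 1 (p+2), (j+1)) = ∏ j ∈ Finset.Ioc 2 (p+3), j := by
      refine Finset.prod_nbij' (fun j => j+1) (fun j => j-1) ?_ ?_ ?_ ?_ ?_ <;>
        intro a ha <;> simp only [Finset.mem_Ioc] at * <;> omega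
    rw [h]
    have h2 := prod_chunk (show 2 ≤ p+3 by omega)
    simpa [Nat.factorial] using h2
  have hY : (p+3).factorial * (∏ j ∈ Finset.Ioc 1 (p+2), (2*p+6-j)) = (2*p+4).factorial := by
    have h : (∏ j ∈ Finset.Ioc 1 (p+2), (2*p+6-j)) = ∏ j ∈ Finset.Ioc (p+3) (2*p+4), j := by
      refine Finset.prod_nbij' (fun j => 2*p+6-j) (fun j => 2*p+6-j) ?_ ?_ ?_ ?_ ?_ <;>
        intro a ha <;> simp only [Finset.mem_Ioc] at * <;> omega
    rw [h]; exact prod_chunk (by omega)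
  calc (∏ j ∈ Finset.Ioc 1 (p+2), (j+1)) * (∏ j ∈ Finset.Ioc 1 (p+2), (2*p+6-j)) * 2
      = (2 * (∏ j ∈ Finset.Ioc 1 (p+2), (j+1))) * (∏ j ∈ Finset.Ioc 1 (p+2), (2*p+6-j)) := by ring
    _ = (p+3).factorial * (∏ j ∈ Finset.Ioc 1 (p+2), (2*p+6-j)) := by rw [hX]
    _ = (2*p+4).factorial := hY

private lemma natineq (p : ℕ) :
    (p+1).factorial * (∏ j ∈ Finset.Ioc 1 (p+2), (2*p+3-j)) < (2*p+4).factorial := by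
  have h3 := N3 p
  have hfac : (2*p+4).factorial = (2*p+4) * ((2*p+3) * ((2*p+2) * (2*p+1).factorial)) := by
    rw [show 2*p+4 = (2*p+3)+1 by omega, Nat.factorial_succ,
        show (2*p+3) = (2*p+2)+1 by omega, Nat.factorial_succ,
        show (2*p+2) = (2*p+1)+1 by omega, Nat.factorial_succ]
  have h5 : (p+1).factorial * (∏ j ∈ Finset.Ioc 1 (p+2), (2*p+3-j))
      = (p+1) * (2*p+1).factorial := by
    rw [Nat.factorial_succ, mul_assoc, h3]
  rw [h5, hfac]
  have hpos := Nat.factorial_pos (2*p+1)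
  calc (p+1) * (2*p+1).factorial
      < ((2*p+4) * ((2*p+3) * (2*p+2))) * (2*p+1).factorial := by
        exact (Nat.mul_lt_mul_right hpos).mpr (by nlinarith [sq_nonneg p, Nat.zero_le p])
    _ = (2*p+4) * ((2*p+3) * ((2*p+2) * (2*p+1).factorial)) := by ring



private lemma key1 (p : ℕ) (r : ℝ) :
    (∏ j ∈ Finset.Icc 2 (2*p+3), (r - (j:ℝ)))
      = ∏ j ∈ Finset.Ioc 1 (p+2), ((r - ((p:ℝ)+5/2))^2 - ((p:ℝ)+5/2-(j:ℝ))^2) := by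
  have h1 : Finset.Icc 2 (2*p+3) = Finset.Ioc 1 (2*p+3) := Finset.Icc_add_one_left_eq_Ioc 1 _
  have h2 := Finset.prod_Ioc_consecutive (fun j : ℕ => (r - (j:ℝ)))
      (show 1 ≤ p+2 by omega) (show p+2 ≤ 2*p+3 by omega)
  have h3 : (∏ j ∈ Finset.Ioc (p+2) (2*p+3), (r - (j:ℝ)))
      = ∏ j ∈ Finset.Ioc 1 (p+2), (r - ((2*p+5-j : ℕ) : ℝ)) := by
    refine Finset.prod_nbij' (fun j => 2*p+5-j) (fun j => 2*p+5-j) ?_ ?_ ?_ ?_ ?_ <;>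
      intro a ha <;> simp only [Finset.mem_Ioc] at * <;> try omega
    have : 2*p+5-(2*p+5-a) = a := by omega
    rw [this]
  rw [h1, ← h2, h3, ← Finset.prod_mul_distrib]
  refine Finset.prod_congr rfl fun j hj => ?_
  simp only [Finset.mem_Ioc] at hj
  rw [Nat.cast_sub (show j ≤ 2*p+5 by omega)]
  push_cast
  ring




private lemma key2 (p : ℕ) :
    (∏ j ∈ Finset.Ioc 1 (p+2), (((p:ℝ)+7/2)^2 - ((p:ℝ)+5/2-(j:ℝ))^2))
      = ((2*p+4).factorial : ℝ) / 2 := by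
  have h : ∀ j ∈ Finset.Ioc 1 (p+2), (((p:ℝ)+7/2)^2 - ((p:ℝ)+5/2-(j:ℝ))^2)
      = (((j+1) * (2*p+6-j) : ℕ) : ℝ) := by
    intro j hj; simp only [Finset.mem_Ioc] at hj
    rw [Nat.cast_mul, Nat.cast_sub (by omega : j ≤ 2*p+6)]
    push_cast; ring
  rw [Finset.prod_congr rfl h, ← Nat.cast_prod, eq_div_iff (by norm_num : (2:ℝ) ≠ 0)]
  exact_mod_cast key2N p

private lemma key4 (p : ℕ) {x y : ℝ} (hx : ((p:ℝ)+1/2)^2 < x) (hxy : x < y) :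
    (∏ j ∈ Finset.Ioc 1 (p+2), (x - ((p:ℝ)+5/2-(j:ℝ))^2))
      < ∏ j ∈ Finset.Ioc 1 (p+2), (y - ((p:ℝ)+5/2-(j:ℝ))^2) := by
  apply Finset.prod_lt_prod_of_nonempty
  · intro j hj; simp only [Finset.mem_Ioc] at hj
    have hj2 : (2:ℝ) ≤ (j:ℝ) := by exact_mod_cast hj.1
    have hj3 : (j:ℝ) ≤ (p:ℝ)+2 := by exact_mod_cast hj.2
    nlinarith
  · intro j hj; linarith
  · exact ⟨2, Finset.mem_Ioc.mpr ⟨by omega, by omega⟩⟩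




private lemma key3 (p : ℕ) {s : ℝ} (hs0 : 0 ≤ s) (hsA : s < (p:ℝ)+1/2) :
    |∏ j ∈ Finset.Ioc 1 (p+2), (s^2 - ((p:ℝ)+5/2-(j:ℝ))^2)|
      < ((2*p+4).factorial : ℝ)/2 := by
  set k := ⌊s⌋₊ with hkdef
  have hk1 : (k:ℝ) ≤ s := Nat.floor_le hs0
  have hk2 : s < (k:ℝ)+1 := Nat.lt_floor_add_one s
  have hkp : k ≤ p := by
    by_contra h
    have : (p:ℝ)+1 ≤ (k:ℝ) := by exact_mod_cast (by omega : p+1 ≤ k)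
    linarith
  set j₀ := p+2-k with hj₀def
  have hj02 : 2 ≤ j₀ := by omega
  have hj0m : j₀ ≤ p+2 := by omega
  have hj0c : (j₀:ℝ) = (p:ℝ)+2-(k:ℝ) := by
    rw [hj₀def, Nat.cast_sub (by omega : k ≤ p+2)]; push_cast; ring
  -- split |product| into node-distances times sums
  have habs : |∏ j ∈ Finset.Ioc 1 (p+2), (s^2 - ((p:ℝ)+5/2-(j:ℝ))^2)|
      = (∏ j ∈ Finset.Ioc 1 (p+2), |s - ((p:ℝ)+5/2-(j:ℝ))|) *
        (∏ j ∈ Finset.Ioc 1 (p+2), (s + ((p:ℝ)+5/2-(j:ℝ)))) := by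
    rw [Finset.abs_prod, ← Finset.prod_mul_distrib]
    refine Finset.prod_congr rfl fun j hj => ?_
    simp only [Finset.mem_Ioc] at hj
    have hja : (j:ℝ) ≤ (p:ℝ)+2 := by exact_mod_cast hj.2
    have hpos : 0 < s + ((p:ℝ)+5/2-(j:ℝ)) := by linarith
    rw [show s^2 - ((p:ℝ)+5/2-(j:ℝ))^2
        = (s - ((p:ℝ)+5/2-(j:ℝ))) * (s + ((p:ℝ)+5/2-(j:ℝ))) from by ring,
      abs_mul, abs_of_pos hpos]
  -- bound on the "sum" product
  have hB2 : (∏ j ∈ Finset.Ioc 1 (p+2), (s + ((p:ℝ)+5/2-(j:ℝ))))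
      ≤ ((∏ j ∈ Finset.Ioc 1 (p+2), (2*p+3-j) : ℕ) : ℝ) := by
    rw [Nat.cast_prod]
    apply Finset.prod_le_prod
    · intro j hj; simp only [Finset.mem_Ioc] at hj
      have hja : (j:ℝ) ≤ (p:ℝ)+2 := by exact_mod_cast hj.2
      linarith
    · intro j hj; simp only [Finset.mem_Ioc] at hj
      rw [Nat.cast_sub (by omega : j ≤ 2*p+3)]
      have hja : (j:ℝ) ≤ (p:ℝ)+2 := by exact_mod_cast hj.2
      push_cast
      linarith
  -- node-distance product split at j₀
  have hsplitA := Finset.prod_Ioc_consecutive (fun j : ℕ => |s - ((p:ℝ)+5/2-(j:ℝ))|)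
      (show 1 ≤ j₀-1 by omega) (show j₀-1 ≤ p+2 by omega)
  have hsplitB := Finset.prod_Ioc_consecutive (fun j : ℕ => |s - ((p:ℝ)+5/2-(j:ℝ))|)
      (show j₀-1 ≤ j₀ by omega) (show j₀ ≤ p+2 by omega)
  have hsingle : Finset.Ioc (j₀-1) j₀ = {j₀} := by
    ext x; simp only [Finset.mem_Ioc, Finset.mem_singleton]; omega
  rw [hsingle, Finset.prod_singleton] at hsplitB
  -- center bound
  have hcen : |s - ((p:ℝ)+5/2-(j₀:ℝ))| ≤ 1/2 := by
    rw [hj0c, abs_le]; constructor <;> linarith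
  -- left product bound
  have hPl : (∏ j ∈ Finset.Ioc 1 (j₀-1), |s - ((p:ℝ)+5/2-(j:ℝ))|)
      ≤ (((j₀-1).factorial : ℕ) : ℝ) := by
    have hb : ∀ j ∈ Finset.Ioc 1 (j₀-1), |s - ((p:ℝ)+5/2-(j:ℝ))| ≤ (((j₀+1-j : ℕ)) : ℝ) := by
      intro j hj; simp only [Finset.mem_Ioc] at hj
      have hjc : (j:ℝ) + 1 ≤ (j₀:ℝ) := by exact_mod_cast (by omega : j+1 ≤ j₀)
      have hjc2 : (2:ℝ) ≤ (j:ℝ) := by exact_mod_cast hj.1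
      rw [Nat.cast_sub (by omega : j ≤ j₀+1)]
      push_cast
      rw [abs_le]; constructor <;> [linarith [hj0c]; linarith [hj0c]]
    calc (∏ j ∈ Finset.Ioc 1 (j₀-1), |s - ((p:ℝ)+5/2-(j:ℝ))|)
        ≤ ∏ j ∈ Finset.Ioc 1 (j₀-1), (((j₀+1-j : ℕ)) : ℝ) :=
          Finset.prod_le_prod (fun j _ => abs_nonneg _) hb
      _ = (((∏ j ∈ Finset.Ioc 1 (j₀-1), (j₀+1-j) : ℕ)) : ℝ) := by rw [Nat.cast_prod]
      _ = (((j₀-1).factorial : ℕ) : ℝ) := by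
          norm_cast
          rw [Finset.prod_congr rfl (fun j hj => (by
            simp only [Finset.mem_Ioc] at hj; omega : j₀+1-j = (j₀-1)+2-j))]
          exact N4 (j₀-1) (by omega)
  -- right product bound
  have hPr : (∏ j ∈ Finset.Ioc j₀ (p+2), |s - ((p:ℝ)+5/2-(j:ℝ))|)
      ≤ (((p+3-j₀).factorial : ℕ) : ℝ) := by
    have hb : ∀ j ∈ Finset.Ioc j₀ (p+2), |s - ((p:ℝ)+5/2-(j:ℝ))| ≤ (((j-j₀+1 : ℕ)) : ℝ) := by
      intro j hj; simp only [Finset.mem_Ioc] at hj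
      have hjc : (j₀:ℝ) + 1 ≤ (j:ℝ) := by exact_mod_cast (by omega : j₀+1 ≤ j)
      have hjc2 : (j:ℝ) ≤ (p:ℝ)+2 := by exact_mod_cast hj.2
      push_cast [Nat.cast_sub (show j₀ ≤ j by omega)]
      rw [abs_le]; constructor <;> [linarith [hj0c]; linarith [hj0c]]
    calc (∏ j ∈ Finset.Ioc j₀ (p+2), |s - ((p:ℝ)+5/2-(j:ℝ))|)
        ≤ ∏ j ∈ Finset.Ioc j₀ (p+2), (((j-j₀+1 : ℕ)) : ℝ) :=
          Finset.prod_le_prod (fun j _ => abs_nonneg _) hb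
      _ = (((∏ j ∈ Finset.Ioc j₀ (p+2), (j-j₀+1) : ℕ)) : ℝ) := by rw [Nat.cast_prod]
      _ = (((p+3-j₀).factorial : ℕ) : ℝ) := by
          norm_cast
          rw [show p+2 = j₀+(p+2-j₀) by omega, N5 j₀ (p+2-j₀)]
          congr 1; omega
  -- combine node bound
  have hPl0 : (0:ℝ) ≤ ∏ j ∈ Finset.Ioc 1 (j₀-1), |s - ((p:ℝ)+5/2-(j:ℝ))| :=
    Finset.prod_nonneg fun j _ => abs_nonneg _
  have hPr0 : (0:ℝ) ≤ ∏ j ∈ Finset.Ioc j₀ (p+2), |s - ((p:ℝ)+5/2-(j:ℝ))| :=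
    Finset.prod_nonneg fun j _ => abs_nonneg _
  have hnode : (∏ j ∈ Finset.Ioc 1 (p+2), |s - ((p:ℝ)+5/2-(j:ℝ))|)
      ≤ (((p+1).factorial : ℕ) : ℝ) / 2 := by
    have hfm := factMul (j₀-1) (p+2-j₀) (by omega)
    rw [show (p+2-j₀)+1 = p+3-j₀ by omega, show (j₀-1)+(p+2-j₀) = p+1 by omega] at hfm
    have hfmR : (((j₀-1).factorial : ℕ) : ℝ) * (((p+3-j₀).factorial : ℕ) : ℝ)
        ≤ (((p+1).factorial : ℕ) : ℝ) := by exact_mod_cast hfm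
    have e : (∏ j ∈ Finset.Ioc 1 (p+2), |s - ((p:ℝ)+5/2-(j:ℝ))|)
        = (∏ j ∈ Finset.Ioc 1 (j₀-1), |s - ((p:ℝ)+5/2-(j:ℝ))|)
          * (|s - ((p:ℝ)+5/2-(j₀:ℝ))| * ∏ j ∈ Finset.Ioc j₀ (p+2), |s - ((p:ℝ)+5/2-(j:ℝ))|) := by
      rw [← hsplitA, ← hsplitB]
    rw [e]
    have h1 : |s - ((p:ℝ)+5/2-(j₀:ℝ))| * (∏ j ∈ Finset.Ioc j₀ (p+2), |s - ((p:ℝ)+5/2-(j:ℝ))|)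
        ≤ (1/2) * (((p+3-j₀).factorial : ℕ) : ℝ) :=
      mul_le_mul hcen hPr hPr0 (by norm_num)
    calc (∏ j ∈ Finset.Ioc 1 (j₀-1), |s - ((p:ℝ)+5/2-(j:ℝ))|)
          * (|s - ((p:ℝ)+5/2-(j₀:ℝ))| * ∏ j ∈ Finset.Ioc j₀ (p+2), |s - ((p:ℝ)+5/2-(j:ℝ))|)
        ≤ (((j₀-1).factorial : ℕ) : ℝ) * ((1/2) * (((p+3-j₀).factorial : ℕ) : ℝ)) := by
          apply mul_le_mul hPl h1 (mul_nonneg (abs_nonneg _) hPr0) (Nat.cast_nonneg _)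
      _ = ((((j₀-1).factorial : ℕ) : ℝ) * (((p+3-j₀).factorial : ℕ) : ℝ)) / 2 := by ring
      _ ≤ (((p+1).factorial : ℕ) : ℝ) / 2 := by linarith
  -- final combination
  have hBpos : (0:ℝ) ≤ ∏ j ∈ Finset.Ioc 1 (p+2), (s + ((p:ℝ)+5/2-(j:ℝ))) := by
    apply Finset.prod_nonneg
    intro j hj; simp only [Finset.mem_Ioc] at hj
    have hja : (j:ℝ) ≤ (p:ℝ)+2 := by exact_mod_cast hj.2
    linarith
  have hfin : (((p+1).factorial : ℕ) : ℝ) * ((∏ j ∈ Finset.Ioc 1 (p+2), (2*p+3-j) : ℕ) : ℝ)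
      < (((2*p+4).factorial : ℕ) : ℝ) := by exact_mod_cast natineq p
  rw [habs]
  calc (∏ j ∈ Finset.Ioc 1 (p+2), |s - ((p:ℝ)+5/2-(j:ℝ))|) *
        (∏ j ∈ Finset.Ioc 1 (p+2), (s + ((p:ℝ)+5/2-(j:ℝ))))
      ≤ ((((p+1).factorial : ℕ) : ℝ) / 2) * ((∏ j ∈ Finset.Ioc 1 (p+2), (2*p+3-j) : ℕ) : ℝ) :=
        mul_le_mul hnode hB2 hBpos (by positivity)
    _ = (((p+1).factorial : ℕ) : ℝ) * ((∏ j ∈ Finset.Ioc 1 (p+2), (2*p+3-j) : ℕ) : ℝ) / 2 := by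
        ring
    _ < (((2*p+4).factorial : ℕ) : ℝ) / 2 := by linarith



/-- The resonance polynomial `Ψ_m(r) = ∏_{j=2}^{2m−1}(r−j) − (2m)!/2` of the
differential equation for two random `m`-ary search trees. -/
noncomputable def resonancePolyMary (m : ℕ) (r : ℝ) : ℝ :=
  (∏ j ∈ Finset.Icc 2 (2 * m - 1), (r - (j : ℝ))) - ((2 * m).factorial : ℝ) / 2

/-- For `m ≥ 2`, `Ψ_m(−1) = 0` and `Ψ_m(2m+2) = 0`, and the real zeros of `Ψ_m` are
exactly `−1` and `2m+2`. -/
theorem resonancePolyMary_zeros (m : ℕ) (hm : 2 ≤ m) :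
    resonancePolyMary m (-1) = 0
    ∧ resonancePolyMary m (2 * (m : ℝ) + 2) = 0
    ∧ {r : ℝ | resonancePolyMary m r = 0} = {-1, 2 * (m : ℝ) + 2} := by
  obtain ⟨p, rfl⟩ : ∃ p, m = p + 2 := ⟨m - 2, by omega⟩
  have e1 : 2*(p+2)-1 = 2*p+3 := by omega
  have e2 : 2*(p+2) = 2*p+4 := by omega
  have hC : (0:ℝ) < ((2*p+4).factorial : ℝ)/2 := by positivity
  have hpsi : ∀ r : ℝ, resonancePolyMary (p+2) r
      = (∏ j ∈ Finset.Ioc 1 (p+2), ((r - ((p:ℝ)+5/2))^2 - ((p:ℝ)+5/2-(j:ℝ))^2))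
        - ((2*p+4).factorial:ℝ)/2 := by
    intro r; rw [resonancePolyMary, e1, e2, key1]
  have hpt : (2 * (((p+2) : ℕ) : ℝ) + 2) = 2*((p:ℝ)+2)+2 := by push_cast; ring
  have hm1 : resonancePolyMary (p+2) (-1) = 0 := by
    rw [hpsi]
    have h : ∀ j ∈ Finset.Ioc 1 (p+2), ((-1:ℝ) - ((p:ℝ)+5/2))^2 - ((p:ℝ)+5/2-(j:ℝ))^2
         = (((p:ℝ)+7/2)^2 - ((p:ℝ)+5/2-(j:ℝ))^2) := fun j _ => by ring
    rw [Finset.prod_congr rfl h, key2, sub_self]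
  have hm2 : resonancePolyMary (p+2) (2 * (((p+2) : ℕ) : ℝ) + 2) = 0 := by
    rw [hpt, hpsi]
    have h : ∀ j ∈ Finset.Ioc 1 (p+2), (2*((p:ℝ)+2)+2 - ((p:ℝ)+5/2))^2 - ((p:ℝ)+5/2-(j:ℝ))^2
         = (((p:ℝ)+7/2)^2 - ((p:ℝ)+5/2-(j:ℝ))^2) := fun j _ => by ring
    rw [Finset.prod_congr rfl h, key2, sub_self]
  refine ⟨hm1, hm2, ?_⟩
  ext r
  simp only [Set.mem_setOf_eq, Set.mem_insert_iff, Set.mem_singleton_iff]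
  constructor
  · intro hr
    rw [hpsi, sub_eq_zero] at hr
    set s := |r - ((p:ℝ)+5/2)| with hsdef
    have hs0 : 0 ≤ s := abs_nonneg _
    have hsq : s^2 = (r - ((p:ℝ)+5/2))^2 := sq_abs _
    rw [← hsq] at hr
    rcases lt_or_ge s ((p:ℝ)+1/2) with hlt | hge
    · exfalso
      have h3 := key3 p hs0 hlt
      rw [hr, abs_of_pos hC] at h3
      exact lt_irrefl _ h3
    · have hA2 : ((p:ℝ)+1/2)^2 ≤ s^2 := by nlinarith
      have hxA : ((p:ℝ)+1/2)^2 < s^2 := by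
        rcases eq_or_lt_of_le hA2 with he | h
        · exfalso
          have hFA : (∏ j ∈ Finset.Ioc 1 (p+2),
              (((p:ℝ)+1/2)^2 - ((p:ℝ)+5/2-(j:ℝ))^2)) = 0 := by
            apply Finset.prod_eq_zero (Finset.mem_Ioc.mpr ⟨by omega, by omega⟩ :
              2 ∈ Finset.Ioc 1 (p+2))
            push_cast; ring
          rw [← he, hFA] at hr
          linarith
        · exact h
      have hBA : ((p:ℝ)+1/2)^2 < ((p:ℝ)+7/2)^2 := by nlinarith
      have hFB := key2 p
      rcases lt_trichotomy (s^2) (((p:ℝ)+7/2)^2) with h | h | h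
      · exfalso
        have := key4 p hxA h
        rw [hr, hFB] at this
        exact lt_irrefl _ this
      · have hfac : (s - ((p:ℝ)+7/2)) * (s + ((p:ℝ)+7/2)) = 0 := by linear_combination h
        rcases mul_eq_zero.mp hfac with h' | h'
        · have hsB : s = (p:ℝ)+7/2 := by linarith
          rw [hsdef] at hsB
          rcases (abs_eq (show (0:ℝ) ≤ (p:ℝ)+7/2 by positivity)).mp hsB with h'' | h''
          · right; rw [hpt]; linarith
          · left; linarith
        · exfalso; have : (0:ℝ) < s + ((p:ℝ)+7/2) := by positivity
          linarith
      · exfalso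
        have := key4 p hBA h
        rw [hr, hFB] at this
        exact lt_irrefl _ this
  · intro h
    rcases h with rfl | rfl
    · exact hm1
    · exact hm2
end

section
/- Let t ≥ 0 be an integer and let f : ℕ → ℚ be defined by f n = 1 for 0 ≤ n ≤ 2t and f n = Σ_{t ≤ j ≤ n−1−t} ( binom(j,t)² · binom(n−1−j, t)² / binom(n, 2t+1)² ) · f j · f (n−1−j) for n ≥ 2t+1, and let F = Σ_{n ≥ 0} f n · X^n be the associated formal power series over ℚ. Then the (2t+1)-st formal derivative of ( X^{2t+1} · F^{(2t+1)} ) equals ((2t+1)!² / (t!)⁴) · ( (X^t · F^{(t)})^{(t)} )², where F^{(k)} denotes the k-th formal derivative. -/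
open PowerSeries

private lemma coeff_iter_deriv (F : PowerSeries ℚ) (k n : ℕ) :
    PowerSeries.coeff n ((fun F : PowerSeries ℚ => PowerSeries.derivative ℚ F)^[k] F)
      = ((n + k).descFactorial k : ℚ) * PowerSeries.coeff (n + k) F := by
  induction k generalizing F n with
  | zero => simp
  | succ k ih =>
    rw [Function.iterate_succ_apply, ih]
    simp only [PowerSeries.coeff_derivative]
    have h : n + (k + 1) = (n + k) + 1 := by ring
    rw [h, Nat.succ_descFactorial_succ]
    push_cast
    ring

private lemma coeff_block (f : ℕ → ℚ) (k n : ℕ) :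
    PowerSeries.coeff n ((fun F : PowerSeries ℚ => PowerSeries.derivative ℚ F)^[k]
        (PowerSeries.X ^ k
          * (fun F : PowerSeries ℚ => PowerSeries.derivative ℚ F)^[k] (PowerSeries.mk f)))
      = ((n + k).descFactorial k : ℚ) ^ 2 * f (n + k) := by
  rw [coeff_iter_deriv, PowerSeries.coeff_X_pow_mul, coeff_iter_deriv, PowerSeries.coeff_mk]
  ring

private lemma coeff_sq (A : PowerSeries ℚ) (n : ℕ) :
    PowerSeries.coeff n (A ^ 2)
      = ∑ i ∈ Finset.range (n + 1),
          PowerSeries.coeff i A * PowerSeries.coeff (n - i) A := by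
  rw [sq, PowerSeries.coeff_mul, Finset.Nat.sum_antidiagonal_eq_sum_range_succ_mk]

/-- The generating function `F` of the probability that two random median-of-(2t+1)
binary search trees are identical satisfies
`(X^{2t+1} F^{(2t+1)})^{(2t+1)} = ((2t+1)!²/t!⁴) ((X^t F^{(t)})^{(t)})²`
as formal power series. -/
theorem fringe_balanced_equality_gf_ode
    (t : ℕ)
    (f : ℕ → ℚ) (hinit : ∀ n : ℕ, n ≤ 2 * t → f n = 1)
    (hrec : ∀ n : ℕ, 2 * t + 1 ≤ n →
      f n = ∑ j ∈ Finset.Icc t (n - 1 - t),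
        ((j.choose t : ℚ) ^ 2 * ((n - 1 - j).choose t : ℚ) ^ 2
            / (n.choose (2 * t + 1) : ℚ) ^ 2) * f j * f (n - 1 - j)) :
    (fun F : PowerSeries ℚ => PowerSeries.derivative ℚ F)^[2 * t + 1]
        (PowerSeries.X ^ (2 * t + 1)
          * (fun F : PowerSeries ℚ => PowerSeries.derivative ℚ F)^[2 * t + 1]
              (PowerSeries.mk f))
      = PowerSeries.C (((2 * t + 1).factorial : ℚ) ^ 2 / (t.factorial : ℚ) ^ 4)
        * ((fun F : PowerSeries ℚ => PowerSeries.derivative ℚ F)^[t]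
            (PowerSeries.X ^ t
              * (fun F : PowerSeries ℚ => PowerSeries.derivative ℚ F)^[t]
                  (PowerSeries.mk f))) ^ 2 := by
  ext n
  rw [coeff_block f (2 * t + 1) n, PowerSeries.coeff_C_mul, coeff_sq]
  simp only [coeff_block]
  rw [hrec (n + (2 * t + 1)) (by omega)]
  have h1 : n + (2 * t + 1) - 1 - t = n + t := by omega
  rw [h1, show Finset.Icc t (n + t) = Finset.Ico t (n + t + 1) by rw [Finset.Ico_add_one_right_eq_Icc],
    Finset.sum_Ico_eq_sum_range, show n + t + 1 - t = n + 1 by omega,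
    Finset.mul_sum, Finset.mul_sum]
  apply Finset.sum_congr rfl
  intro i hi
  have hi' : i ≤ n := Nat.lt_succ_iff.mp (Finset.mem_range.mp hi)
  have e1 : n + (2 * t + 1) - 1 - (t + i) = n - i + t := by omega
  rw [e1, show t + i = i + t by ring]
  have hc : (((n + (2 * t + 1)).choose (2 * t + 1) : ℚ)) ≠ 0 :=
    Nat.cast_ne_zero.mpr (Nat.choose_pos (by omega)).ne'
  have hf : (t.factorial : ℚ) ≠ 0 := Nat.cast_ne_zero.mpr t.factorial_ne_zero
  simp only [Nat.descFactorial_eq_factorial_mul_choose]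
  push_cast
  field_simp
end
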